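/- Let A and B be n×n complex matrices. Then 2·‖A+B‖_F² ≤ (√2 + 1)·‖|A|+|B|‖_F², where ‖·‖_F denotes the Frobenius norm. -/

import Mathlib

open scoped Matrix ComplexOrder

/-- The absolute value `|A| := (A*A)^{1/2}` of a square complex matrix, i.e. the (unique)
positive semidefinite square root of `Aᴴ * A`. -/
noncomputable def matrixAbs {n : ℕ} (A : Matrix (Fin n) (Fin n) ℂ) :
    Matrix (Fin n) (Fin n) ℂ :=
  (Matrix.posSemidef_conjTranspose_mul_self A).1.eigenvectorUnitary.1 *
    Matrix.diagonal ((↑) ∘ Real.sqrt ∘ (Matrix.posSemidef_conjTranspose_mul_self A).1.eigenvalues) *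
    (star (Matrix.posSemidef_conjTranspose_mul_self A).1.eigenvectorUnitary : Matrix (Fin n) (Fin n) ℂ)

/-- The Frobenius norm `‖A‖_F = (tr |A|²)^{1/2}` of a square complex matrix. -/
noncomputable def frobeniusNorm' {n : ℕ} (A : Matrix (Fin n) (Fin n) ℂ) : ℝ :=
  Real.sqrt ((matrixAbs A ^ 2).trace.re)

/-!
Write `A = X R` with `R = |A|^{1/2}` Hermitian and `Xᴴ X = |A|` (take `X = A |A|^{-1/2}`,
inverting only on the support of `|A|`), and likewise `B = Y S`. Then
`tr (Aᴴ B) = ⟨Yᴴ X, S R⟩`, where `⟨U, V⟩ = tr (Uᴴ V)`, with `‖S R‖² = tr (|A| |B|)` and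
`‖Yᴴ X‖² = tr (X Xᴴ Y Yᴴ) ≤ (‖A‖² + ‖B‖²) / 2`. The inequality `2 t Re ⟨U, V⟩ ≤ ‖U‖² + t² ‖V‖²`
at `t = √2 + 1` then gives the claim once `‖A + B‖²` and `‖|A| + |B|‖²` are expanded.
-/

open RCLike

namespace Matrix

section Trace

variable {m ι 𝕜 : Type*} [Fintype m] [Fintype ι] [RCLike 𝕜]

lemma re_trace_conjTranspose_mul_self_nonneg (X : Matrix m ι 𝕜) : 0 ≤ re (Xᴴ * X).trace := by
  simp only [trace, diag, mul_apply, conjTranspose_apply, map_sum]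
  exact Finset.sum_nonneg fun _ _ => Finset.sum_nonneg fun _ _ => by
    rw [RCLike.star_def, RCLike.conj_mul]; norm_cast; positivity

lemma re_trace_conjTranspose_mul_symm (X Y : Matrix m ι 𝕜) :
    re (Yᴴ * X).trace = re (Xᴴ * Y).trace := by
  rw [← conjTranspose_conjTranspose X, ← conjTranspose_mul, trace_conjTranspose,
    conjTranspose_conjTranspose, RCLike.star_def, conj_re]

lemma re_trace_conjTranspose_mul_self_add (X Y : Matrix m ι 𝕜) :
    re ((X + Y)ᴴ * (X + Y)).trace =
      re (Xᴴ * X).trace + re (Yᴴ * Y).trace + 2 * re (Xᴴ * Y).trace := by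
  rw [conjTranspose_add, Matrix.add_mul, Matrix.mul_add, Matrix.mul_add, trace_add, trace_add,
    trace_add, map_add, map_add, map_add, re_trace_conjTranspose_mul_symm X Y]
  ring

lemma two_mul_re_trace_conjTranspose_mul_le (X Y : Matrix m ι 𝕜) (t : ℝ) :
    2 * t * re (Xᴴ * Y).trace ≤ re (Xᴴ * X).trace + t ^ 2 * re (Yᴴ * Y).trace := by
  have h := re_trace_conjTranspose_mul_self_nonneg (X - (t : 𝕜) • Y)
  rw [sub_eq_add_neg, re_trace_conjTranspose_mul_self_add] at h
  simp only [conjTranspose_neg, conjTranspose_smul, Matrix.neg_mul, Matrix.mul_neg, smul_mul,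
    Matrix.mul_smul, trace_neg, trace_smul, smul_eq_mul, RCLike.star_def, conj_ofReal,
    re_ofReal_mul, map_neg] at h
  linarith

lemma trace_sq_self_mul_conjTranspose (X : Matrix m ι 𝕜) :
    ((X * Xᴴ)ᴴ * (X * Xᴴ)).trace = (Xᴴ * X * (Xᴴ * X)).trace := by
  rw [conjTranspose_mul, conjTranspose_conjTranspose, Matrix.mul_assoc, trace_mul_comm]
  simp only [Matrix.mul_assoc]

end Trace

section FunctionalCalculus

variable {ι 𝕜 : Type*} [Fintype ι] [DecidableEq ι] [RCLike 𝕜]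

lemma cfc_mul_cfc (A : Matrix ι ι 𝕜) (f g : ℝ → ℝ) :
    cfc f A * cfc g A = cfc (fun x => f x * g x) A :=
  (cfc_mul f g A (A.finite_real_spectrum.continuousOn f)
    (A.finite_real_spectrum.continuousOn g)).symm

lemma conjTranspose_cfc (A : Matrix ι ι 𝕜) (f : ℝ → ℝ) : (cfc f A)ᴴ = cfc f A :=
  (cfc_predicate f A).star_eq

open scoped MatrixOrder in
lemma nonneg_of_mem_spectrum_conjTranspose_mul_self (A : Matrix ι ι 𝕜) {x : ℝ}
    (hx : x ∈ spectrum ℝ (Aᴴ * A)) : 0 ≤ x :=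
  spectrum_nonneg_of_nonneg (nonneg_iff_posSemidef.mpr (posSemidef_conjTranspose_mul_self A)) hx

lemma cfc_sqrt_mul_self_conjTranspose_mul_self (A : Matrix ι ι 𝕜) :
    cfc Real.sqrt (Aᴴ * A) * cfc Real.sqrt (Aᴴ * A) = Aᴴ * A := by
  rw [cfc_mul_cfc]
  conv_rhs => rw [← cfc_id' ℝ (Aᴴ * A) (isHermitian_conjTranspose_mul_self A).isSelfAdjoint]
  exact cfc_congr fun x hx =>
    Real.mul_self_sqrt (nonneg_of_mem_spectrum_conjTranspose_mul_self A hx)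

-- `(√√0)⁻¹ = 0`, so `E` below is the projection onto the support of `Aᴴ * A`, which `A` fixes.
lemma mul_cfc_inv_sqrt_sqrt_mul_cfc_sqrt_sqrt (A : Matrix ι ι 𝕜) :
    A * cfc (fun x => (√√x)⁻¹) (Aᴴ * A) * cfc (fun x => √√x) (Aᴴ * A) = A := by
  have hid := cfc_id' ℝ (Aᴴ * A) (isHermitian_conjTranspose_mul_self A).isSelfAdjoint
  set E := cfc (fun x => (√√x)⁻¹ * √√x) (Aᴴ * A)
  have hE : Aᴴ * A * E = Aᴴ * A := by
    conv_lhs => rw [← hid]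
    conv_rhs => rw [← hid]
    rw [cfc_mul_cfc]
    refine cfc_congr fun x hx => ?_
    rcases (nonneg_of_mem_spectrum_conjTranspose_mul_self A hx).eq_or_lt with rfl | hpos
    · simp
    · rw [inv_mul_cancel₀ (by positivity), mul_one]
  have h : A * (1 - E) = 0 := by
    rw [← conjTranspose_mul_self_mul_eq_zero, Matrix.mul_sub, hE, Matrix.mul_one, sub_self]
  rw [Matrix.mul_assoc, cfc_mul_cfc]
  rwa [Matrix.mul_sub, Matrix.mul_one, sub_eq_zero, eq_comm] at h

lemma exists_mul_eq_and_conjTranspose_mul_self_eq (A : Matrix ι ι 𝕜) :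
    ∃ X R : Matrix ι ι 𝕜, Rᴴ = R ∧ R * R = cfc Real.sqrt (Aᴴ * A) ∧
      Xᴴ * X = cfc Real.sqrt (Aᴴ * A) ∧ X * R = A := by
  refine ⟨A * cfc (fun x => (√√x)⁻¹) (Aᴴ * A), cfc (fun x => √√x) (Aᴴ * A),
    conjTranspose_cfc _ _, ?_, ?_, mul_cfc_inv_sqrt_sqrt_mul_cfc_sqrt_sqrt A⟩
  · rw [cfc_mul_cfc]
    exact cfc_congr fun x _ => Real.mul_self_sqrt (Real.sqrt_nonneg x)
  · calc (A * cfc (fun x => (√√x)⁻¹) (Aᴴ * A))ᴴ * (A * cfc (fun x => (√√x)⁻¹) (Aᴴ * A))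
        = cfc (fun x => (√√x)⁻¹) (Aᴴ * A) *
            (cfc (fun x => x) (Aᴴ * A) * cfc (fun x => (√√x)⁻¹) (Aᴴ * A)) := by
          rw [cfc_id' ℝ (Aᴴ * A) (isHermitian_conjTranspose_mul_self A).isSelfAdjoint,
            conjTranspose_mul, conjTranspose_cfc]
          simp only [Matrix.mul_assoc]
      _ = cfc Real.sqrt (Aᴴ * A) := by
          rw [cfc_mul_cfc, cfc_mul_cfc]
          refine cfc_congr fun x _ => ?_
          rw [mul_left_comm, ← mul_inv, Real.mul_self_sqrt (Real.sqrt_nonneg x),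
            ← div_eq_mul_inv, Real.div_sqrt]

theorem two_mul_re_trace_conjTranspose_mul_le_re_trace_cfc_sqrt_mul (A B : Matrix ι ι 𝕜)
    (t : ℝ) :
    2 * t * re (Aᴴ * B).trace ≤
      (re (Aᴴ * A).trace + re (Bᴴ * B).trace) / 2 +
        t ^ 2 * re (cfc Real.sqrt (Aᴴ * A) * cfc Real.sqrt (Bᴴ * B)).trace := by
  obtain ⟨X, R, hR, hRR, hXX, hXR⟩ := exists_mul_eq_and_conjTranspose_mul_self_eq A
  obtain ⟨Y, S, hS, hSS, hYY, hYS⟩ := exists_mul_eq_and_conjTranspose_mul_self_eq B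
  have hAB : (Aᴴ * B).trace = ((Yᴴ * X)ᴴ * (S * R)).trace := by
    rw [← hXR, ← hYS]
    simp only [conjTranspose_mul, conjTranspose_conjTranspose, hR, Matrix.mul_assoc]
    rw [trace_mul_comm]
    simp only [Matrix.mul_assoc]
  have hSR : ((S * R)ᴴ * (S * R)).trace =
      (cfc Real.sqrt (Aᴴ * A) * cfc Real.sqrt (Bᴴ * B)).trace := by
    rw [← hRR, ← hSS, conjTranspose_mul, hR, hS, Matrix.mul_assoc, trace_mul_comm]
    simp only [Matrix.mul_assoc]
    rw [← Matrix.mul_assoc, trace_mul_comm, Matrix.mul_assoc]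
  have hYX : 2 * re ((Yᴴ * X)ᴴ * (Yᴴ * X)).trace ≤ re (Aᴴ * A).trace + re (Bᴴ * B).trace := by
    have h := two_mul_re_trace_conjTranspose_mul_le (X * Xᴴ) (Y * Yᴴ) 1
    have hXY : ((Yᴴ * X)ᴴ * (Yᴴ * X)).trace = ((X * Xᴴ)ᴴ * (Y * Yᴴ)).trace := by
      simp only [conjTranspose_mul, conjTranspose_conjTranspose, Matrix.mul_assoc]
      rw [trace_mul_comm]
      simp only [Matrix.mul_assoc]
      rw [← Matrix.mul_assoc, trace_mul_comm, Matrix.mul_assoc]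
    rw [trace_sq_self_mul_conjTranspose, hXX, cfc_sqrt_mul_self_conjTranspose_mul_self,
      trace_sq_self_mul_conjTranspose, hYY, cfc_sqrt_mul_self_conjTranspose_mul_self] at h
    rw [hXY]
    linarith
  have := two_mul_re_trace_conjTranspose_mul_le (Yᴴ * X) (S * R) t
  rw [hAB, ← hSR]
  linarith

end FunctionalCalculus

end Matrix

lemma matrixAbs_eq_cfc {n : ℕ} (A : Matrix (Fin n) (Fin n) ℂ) :
    matrixAbs A = cfc Real.sqrt (Aᴴ * A) := by
  rw [(Matrix.posSemidef_conjTranspose_mul_self A).1.cfc_eq]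
  rfl

lemma sq_frobeniusNorm' {n : ℕ} (A : Matrix (Fin n) (Fin n) ℂ) :
    frobeniusNorm' A ^ 2 = re (Aᴴ * A).trace := by
  rw [frobeniusNorm', matrixAbs_eq_cfc, sq (cfc _ _), Matrix.cfc_sqrt_mul_self_conjTranspose_mul_self]
  exact Real.sq_sqrt (Matrix.re_trace_conjTranspose_mul_self_nonneg A)

/-- For all `n × n` complex matrices `A, B`,
`2·‖A+B‖_F² ≤ (√2 + 1)·‖|A|+|B|‖_F²`. -/
theorem two_mul_sq_frobenius_norm_add_le' {n : ℕ} (A B : Matrix (Fin n) (Fin n) ℂ) :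
    2 * frobeniusNorm' (A + B) ^ 2 ≤
      (Real.sqrt 2 + 1) * frobeniusNorm' (matrixAbs A + matrixAbs B) ^ 2 := by
  have key := Matrix.two_mul_re_trace_conjTranspose_mul_le_re_trace_cfc_sqrt_mul A B (√2 + 1)
  rw [sq_frobeniusNorm', sq_frobeniusNorm', Matrix.re_trace_conjTranspose_mul_self_add,
    Matrix.re_trace_conjTranspose_mul_self_add, matrixAbs_eq_cfc, matrixAbs_eq_cfc,
    Matrix.conjTranspose_cfc, Matrix.conjTranspose_cfc,
    Matrix.cfc_sqrt_mul_self_conjTranspose_mul_self,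
    Matrix.cfc_sqrt_mul_self_conjTranspose_mul_self]
  have h2 : √2 ^ 2 = 2 := Real.sq_sqrt (by norm_num)
  have h1 : 0 ≤ √2 - 1 := by nlinarith [Real.sqrt_nonneg 2]
  -- multiply `key` by `2 (√2 - 1) = 2 / (√2 + 1)`
  linear_combination 2 * mul_le_mul_of_nonneg_left key h1 +
    (2 * (√2 + 1) * re (cfc Real.sqrt (Aᴴ * A) * cfc Real.sqrt (Bᴴ * B)).trace
      - 4 * re (Aᴴ * B).trace) * h2
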